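/- Let ν, M, κ be real numbers. Then the dissipation inequality ν·(tr(AᵀA) + tr(A·A)) + M·‖w‖² + (κ/θ)·‖z‖² ≥ 0 holds for all real 3×3 matrices A, all vectors w, z ∈ ℝ³, and all real θ > 0, if and only if ν ≥ 0, M ≥ 0 and κ ≥ 0. -/

import Mathlib

/-! Since `tr(AᵀA) + tr(A²) = ½ tr(SᵀS) ≥ 0` with `S = A + Aᵀ`, each of the three terms is a
nonnegative coefficient times a nonnegative quantity. Conversely, testing with `A = 1`, or with a
unit vector `w` or `z`, isolates each coefficient. -/

open Matrix

namespace Matrix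

variable {n R : Type*} [Fintype n] [CommRing R]

theorem trace_transpose_mul_add_trace_mul_self (A : Matrix n n R) :
    2 * (trace (Aᵀ * A) + trace (A * A)) = trace ((A + Aᵀ)ᵀ * (A + Aᵀ)) := by
  have h₁ : trace (Aᵀ * Aᵀ) = trace (A * A) := by rw [← transpose_mul, trace_transpose]
  have h₂ : trace (A * Aᵀ) = trace (Aᵀ * A) := trace_mul_comm A Aᵀ
  simp only [transpose_add, transpose_transpose, add_mul, mul_add, trace_add, h₁, h₂]
  ring

theorem trace_transpose_mul_self_nonneg (A : Matrix n n ℝ) : 0 ≤ trace (Aᵀ * A) := by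
  simpa only [conjTranspose_eq_transpose_of_trivial] using
    (posSemidef_conjTranspose_mul_self A).trace_nonneg

theorem trace_transpose_mul_add_trace_mul_self_nonneg (A : Matrix n n ℝ) :
    0 ≤ trace (Aᵀ * A) + trace (A * A) := by
  have hsym := trace_transpose_mul_add_trace_mul_self A
  have hS := trace_transpose_mul_self_nonneg (A + Aᵀ)
  linarith

end Matrix

/-- The dissipation inequality
`ν(tr(AᵀA) + tr(A·A)) + M‖w‖² + (κ/θ)‖z‖² ≥ 0` holds for all real `3 × 3`
matrices `A`, all `w, z ∈ ℝ³` and all `θ > 0` if and only if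
`ν ≥ 0`, `M ≥ 0` and `κ ≥ 0`. -/
theorem dissipation_inequality_iff_nonneg_coefficients (ν M κ : ℝ) :
    (∀ (A : Matrix (Fin 3) (Fin 3) ℝ) (w z : EuclideanSpace ℝ (Fin 3)) (θ : ℝ),
        0 < θ →
        0 ≤ ν * (Matrix.trace (Aᵀ * A) + Matrix.trace (A * A))
            + M * ‖w‖ ^ 2 + (κ / θ) * ‖z‖ ^ 2)
    ↔ (0 ≤ ν ∧ 0 ≤ M ∧ 0 ≤ κ) := by
  constructor
  · intro h
    let e : EuclideanSpace ℝ (Fin 3) := EuclideanSpace.single 0 1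
    have hν := h 1 0 0 1 one_pos
    have hM := h 0 e 0 1 one_pos
    have hκ := h 0 0 e 1 one_pos
    norm_num [e, PiLp.norm_single] at hν hM hκ
    exact ⟨hν, hM, hκ⟩
  · rintro ⟨hν, hM, hκ⟩ A w z θ hθ
    have hA := trace_transpose_mul_add_trace_mul_self_nonneg A
    positivity
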